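/- arXiv:1904.07545 — 5 statements merged into one kernel-verified Lean document; each statement's English description precedes it below -/
import Mathlib

section
/- For all natural numbers m, n, m′, n′ one has (I_{2^n} ⊗ X(m′+1, n′)) · (X(m, n+1) ⊗ I_{2^{m′}}) = X(m+m′, n+n′); that is, two X-spiders (grey spiders) composed along a single wire fuse into a single X-spider (the derived grey spider fusion rule of the phase-free ZH-calculus, Lemma 3.2). -/
/-- An `(m,n)`-qubit map: a complex matrix with rows indexed by output
bit strings of length `n` and columns indexed by input bit strings of length `m`. -/
abbrev QMap (m n : ℕ) : Type := Matrix (Fin n → Bool) (Fin m → Bool) ℂ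

/-- Canonical identification of a pair of bit strings with a single bit string. -/
def bitEquiv (a b : ℕ) : ((Fin a → Bool) × (Fin b → Bool)) ≃ (Fin (a + b) → Bool) :=
  (Equiv.sumArrowEquivProdArrow (Fin a) (Fin b) Bool).symm.trans
    (Equiv.arrowCongr finSumFinEquiv (Equiv.refl Bool))

/-- Kronecker (tensor) product of qubit maps, under the canonical identification. -/
def tens {m n m' n' : ℕ} (A : QMap m n) (B : QMap m' n') : QMap (m + m') (n + n') :=
  Matrix.reindex (bitEquiv n n') (bitEquiv m m') (Matrix.kroneckerMap (· * ·) A B)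

/-- Transport a qubit map along equalities of the numbers of inputs and outputs. -/
def castQ {m m' n n' : ℕ} (hm : m = m') (hn : n = n') (A : QMap m n) : QMap m' n' :=
  Matrix.reindex (Equiv.arrowCongr (finCongr hn) (Equiv.refl Bool))
    (Equiv.arrowCongr (finCongr hm) (Equiv.refl Bool)) A

/-- The Z-spider `Z(m,n)`: entry 1 iff all `m+n` bits are equal (all 0 or all 1). -/
def Zsp (m n : ℕ) : QMap m n := fun j i =>
  if ((∀ k, i k = false) ∧ (∀ k, j k = false)) ∨ ((∀ k, i k = true) ∧ (∀ k, j k = true))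
  then 1 else 0

/-- The X-spider `X(m,n)`: entry 1 iff the sum mod 2 of all `m+n` bits is 0. -/
def Xsp (m n : ℕ) : QMap m n := fun j i =>
  if ((∑ k, (if i k then (1 : ZMod 2) else 0)) + ∑ k, (if j k then (1 : ZMod 2) else 0)) = 0
  then 1 else 0

/-- The (phase-free) H-box `H(m,n)`: entry −1 iff all `m+n` bits are 1, else 1. -/
def Hbox (m n : ℕ) : QMap m n := fun j i =>
  if (∀ k, i k = true) ∧ (∀ k, j k = true) then -1 else 1

/-- The Hadamard gate `(1/√2)·[[1,1],[1,−1]]`. -/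
noncomputable def Had : QMap 1 1 := fun j i =>
  (Real.sqrt 2 : ℂ)⁻¹ * (if i 0 = true ∧ j 0 = true then -1 else 1)

/-- The NOT gate `[[0,1],[1,0]]`. -/
def Xg : QMap 1 1 := fun j i => if j 0 = i 0 then 0 else 1

/-- The Z gate `diag(1,−1)`. -/
def Zg : QMap 1 1 := fun j i => if j 0 = i 0 then (if i 0 = true then -1 else 1) else 0

/-- The triangle `[[1,1],[0,1]]` (row `j`, column `i`; the only zero entry is at `j=1, i=0`). -/
def Tri : QMap 1 1 := fun j i => if j 0 = true ∧ i 0 = false then 0 else 1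

/-- The AND gate: `|x,y⟩ ↦ |x ∧ y⟩`. -/
def ANDg : QMap 2 1 := fun j i => if j 0 = (i 0 && i 1) then 1 else 0

/-- The swap of two qubits. -/
def swapQ : QMap 2 2 := fun j i => if j 0 = i 1 ∧ j 1 = i 0 then 1 else 0

/-- The cup `|00⟩ + |11⟩`. -/
def cupQ : QMap 0 2 := fun j _ => if j 0 = j 1 then 1 else 0

/-- The cap `⟨00| + ⟨11|`. -/
def capQ : QMap 2 0 := fun _ i => if i 0 = i 1 then 1 else 0

/-- The scalar `1/√2` as a `(0,0)`-map. -/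
noncomputable def starQ : QMap 0 0 := fun _ _ => (Real.sqrt 2 : ℂ)⁻¹

/-- `k`-fold tensor power of a qubit map. -/
def tpow {a b : ℕ} (A : QMap a b) : (k : ℕ) → QMap (a * k) (b * k)
  | 0 => (1 : QMap 0 0)
  | k + 1 => tens (tpow A k) A

/-- The wire in block `s` (of `b` blocks), at position `t` within the block (of size `a`). -/
def wp {a b : ℕ} (s : Fin b) (t : Fin a) : Fin (a * b) :=
  ⟨a * s.val + t.val, by
    have ht := t.isLt
    have hs := s.isLt
    have h1 : a * s.val + t.val < a * (s.val + 1) := by rw [Nat.mul_succ]; omega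
    exact lt_of_lt_of_le h1 (Nat.mul_le_mul (le_refl a) hs)⟩

/-- The permutation `σ_{m,n}` regrouping `m` blocks of `n` wires into `n` blocks of `m` wires:
it reindexes bit strings `g : Fin m × Fin n → Bool` to `(s,t) ↦ g(t,s)`. -/
def sigmaQ (m n : ℕ) : QMap (n * m) (m * n) := fun j i =>
  if ∀ (s : Fin m) (t : Fin n), j (wp t s) = i (wp s t) then 1 else 0

lemma bitEquiv_castAdd (a b : ℕ) (f : Fin a → Bool) (h : Fin b → Bool) (k : Fin a) :
    bitEquiv a b (f, h) (Fin.castAdd b k) = f k := by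
  simp [bitEquiv, Equiv.sumArrowEquivProdArrow]

lemma bitEquiv_natAdd (a b : ℕ) (f : Fin a → Bool) (h : Fin b → Bool) (k : Fin b) :
    bitEquiv a b (f, h) (Fin.natAdd a k) = h k := by
  simp [bitEquiv, Equiv.sumArrowEquivProdArrow]

lemma bitEquiv_symm_apply (a b : ℕ) (F : Fin (a+b) → Bool) :
    (bitEquiv a b).symm F = (fun k => F (Fin.castAdd b k), fun k => F (Fin.natAdd a k)) := by
  refine Prod.ext ?_ ?_ <;> funext k <;>
    simp [bitEquiv, Equiv.sumArrowEquivProdArrow, Equiv.arrowCongr]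

lemma tens_apply {m n m' n' : ℕ} (A : QMap m n) (B : QMap m' n')
    (j : Fin (n+n') → Bool) (i : Fin (m+m') → Bool) :
    tens A B j i = A (fun k => j (Fin.castAdd n' k)) (fun k => i (Fin.castAdd m' k)) *
      B (fun k => j (Fin.natAdd n k)) (fun k => i (Fin.natAdd m k)) := by
  simp [tens, Matrix.reindex_apply, bitEquiv_symm_apply, Matrix.kroneckerMap]

lemma castQ_apply {m n n' : ℕ} (hn : n = n') (M : QMap m n) (g : Fin n' → Bool)
    (i : Fin m → Bool) :
    castQ rfl hn M g i = M (fun k => g (Fin.cast hn k)) i := by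
  show M ((Equiv.arrowCongr (finCongr hn) (Equiv.refl Bool)).symm g)
      ((Equiv.arrowCongr (finCongr rfl) (Equiv.refl Bool)).symm i) = _
  congr 1 <;> funext k <;> simp [Equiv.arrowCongr, finCongr]

lemma cast_castAdd_castSucc {n m' : ℕ} (h : (n+1) + m' = n + (m'+1)) (k : Fin n) :
    Fin.cast h (Fin.castAdd m' (Fin.castSucc k)) = Fin.castAdd (m'+1) k := by
  ext; simp

lemma cast_castAdd_last {n m' : ℕ} (h : (n+1) + m' = n + (m'+1)) :
    Fin.cast h (Fin.castAdd m' (Fin.last n)) = Fin.natAdd n (0 : Fin (m'+1)) := by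
  ext; simp

lemma cast_natAdd' {n m' : ℕ} (h : (n+1) + m' = n + (m'+1)) (k : Fin m') :
    Fin.cast h (Fin.natAdd (n+1) k) = Fin.natAdd n k.succ := by
  ext; simp; omega

/-- two X-spiders composed along a single wire fuse into a single X-spider. -/
theorem zh_xspider_fusion (m n m' n' : ℕ) :
    tens (1 : QMap n n) (Xsp (m' + 1) n') *
      castQ rfl (by omega : (n + 1) + m' = n + (m' + 1))
        (tens (Xsp m (n + 1)) (1 : QMap m' m')) =
    Xsp (m + m') (n + n') := by
  have h : (n + 1) + m' = n + (m' + 1) := by omega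
  ext j i
  rw [Matrix.mul_apply]
  rw [← Equiv.sum_comp ((Equiv.prodCongr (Equiv.refl (Fin n → Bool))
      (Fin.consEquiv fun _ : Fin (m'+1) => Bool)).trans (bitEquiv n (m'+1)))]
  simp only [Fintype.sum_prod_type, Equiv.trans_apply, Equiv.prodCongr_apply, Equiv.refl_apply,
    Prod.map, Fin.consEquiv_apply, tens_apply, castQ_apply, bitEquiv_castAdd, bitEquiv_natAdd,
    Matrix.one_apply, cast_natAdd', cast_castAdd_castSucc, cast_castAdd_last, Fin.cons_succ,
    Fin.cons_zero]
  rw [Finset.sum_eq_single (fun k => j (Fin.castAdd n' k))]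
  rotate_left
  · intro x _ hx
    have hne : ¬ ((fun k => j (Fin.castAdd n' k)) = fun k => x k) := fun hEq =>
      hx (funext fun k => (congrFun hEq k).symm)
    simp [hne]
  · intro hb; exact absurd (Finset.mem_univ _) hb
  rw [Finset.sum_comm]
  rw [Finset.sum_eq_single (fun k => i (Fin.natAdd m k))]
  rotate_left
  · intro x _ hx
    have hne : ¬ ((fun k => x k) = fun k => i (Fin.natAdd m k)) := fun hEq =>
      hx (funext fun k => congrFun hEq k)
    simp [hne]
  · intro hb; exact absurd (Finset.mem_univ _) hb
  simp only [eq_self_iff_true, if_true, if_pos rfl, one_mul, mul_one, Fin.consEquiv_apply, Xsp]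
  have hrow : ∀ b : Bool,
      (∑ k : Fin (n+1), if (bitEquiv n (m'+1))
          ((fun k => j (Fin.castAdd n' k)), (Fin.consEquiv fun _ : Fin (m'+1) => Bool) (b, fun k => i (Fin.natAdd m k)))
          (Fin.cast h (Fin.castAdd m' k)) then (1 : ZMod 2) else 0) =
      (∑ k : Fin n, if j (Fin.castAdd n' k) then (1 : ZMod 2) else 0) + (if b then 1 else 0) := by
    intro b
    rw [Fin.sum_univ_castSucc]
    simp [cast_castAdd_castSucc h, cast_castAdd_last h, bitEquiv_castAdd, bitEquiv_natAdd,
      Fin.consEquiv_apply]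
  have hcons : ∀ b : Bool,
      (∑ k : Fin (m'+1), if (Fin.cons (α := fun _ => Bool) b (fun k => i (Fin.natAdd m k)) k) then (1 : ZMod 2) else 0) =
      (if b then 1 else 0) + ∑ k : Fin m', if i (Fin.natAdd m k) then (1 : ZMod 2) else 0 := by
    intro b
    rw [Fin.sum_univ_succ]
    simp
  simp only [hrow, hcons]
  simp only [Fin.sum_univ_add]
  generalize (∑ x : Fin m, if i (Fin.castAdd m' x) = true then (1:ZMod 2) else 0) = I1
  generalize (∑ k : Fin m', if i (Fin.natAdd m k) = true then (1:ZMod 2) else 0) = I2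
  generalize (∑ k : Fin n, if j (Fin.castAdd n' k) = true then (1:ZMod 2) else 0) = J1
  generalize (∑ x : Fin n', if j (Fin.natAdd n x) = true then (1:ZMod 2) else 0) = J2
  rw [Fintype.sum_bool]
  simp only [if_true, if_false, Bool.false_eq_true, reduceIte]
  fin_cases I1 <;> fin_cases I2 <;> fin_cases J1 <;> fin_cases J2 <;>
    simp (config := { decide := true })
end

section
/- For all natural numbers m, n one has Z(1,n) · X(m,1) = X(m,1)^{⊗n} · σ_{m,n} · Z(1,n)^{⊗m}; that is, the Z-spider (copy) and the X-spider (XOR) satisfy the bialgebra law, with the right-hand side the complete bipartite diagram (soundness of rule (BA1) of the phase-free ZH-calculus). -/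
/-!
Both sides are compared entrywise. The column of `Z(1,n)^{⊗m}` at input `i` is the basis vector
that copies each bit `i s` across the `s`-th block of `n` wires; `σ_{m,n}` transposes the blocks,
so each of the `n` X-spiders on the right receives all of `i`. Hence both sides have entry 1
exactly when every output bit equals the parity of `i`, the unique value the X-spider
`X(m,1)` accepts.
-/

section Blocks

variable {a b : ℕ}

def wpEquiv : Fin b × Fin a ≃ Fin (a * b) :=
  finProdFinEquiv.trans (finCongr (Nat.mul_comm b a))

theorem wpEquiv_apply (s : Fin b) (t : Fin a) : wpEquiv (s, t) = wp s t := by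
  ext
  simp [wpEquiv, wp, finProdFinEquiv, Nat.add_comm]

def ofBlocks {β : Type*} (F : Fin b → Fin a → β) (k : Fin (a * b)) : β :=
  F (wpEquiv.symm k).1 (wpEquiv.symm k).2

@[simp]
theorem ofBlocks_wp {β : Type*} (F : Fin b → Fin a → β) (s : Fin b) (t : Fin a) :
    ofBlocks F (wp s t) = F s t := by
  simp [ofBlocks, ← wpEquiv_apply]

theorem eq_ofBlocks_iff {β : Type*} (h : Fin (a * b) → β) (F : Fin b → Fin a → β) :
    h = ofBlocks F ↔ ∀ s t, h (wp s t) = F s t := by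
  refine ⟨fun hF s t => hF ▸ ofBlocks_wp F s t, fun hF => funext fun k => ?_⟩
  obtain ⟨⟨s, t⟩, rfl⟩ := wpEquiv.surjective k
  simp [wpEquiv_apply, hF]

end Blocks

theorem mul_apply_of_apply_eq_ite {ι κ ν α : Type*} [Fintype κ] [DecidableEq κ]
    [NonAssocSemiring α] (M : Matrix ι κ α) {N : Matrix κ ν α} {j : ι} {i : ν} {v : κ}
    (hN : ∀ h, N h i = if h = v then 1 else 0) : (M * N) j i = M j v := by
  simp [Matrix.mul_apply, hN]

theorem tpow_apply {a b : ℕ} (A : QMap a b) (k : ℕ) (j : Fin (b * k) → Bool)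
    (i : Fin (a * k) → Bool) :
    tpow A k j i = ∏ t : Fin k, A (fun u => j (wp t u)) (fun u => i (wp t u)) := by
  induction k with
  | zero =>
    have : j = i := funext fun k => absurd k.isLt (by simp)
    simp [tpow, Matrix.one_apply, this]
  | succ k ih =>
    rw [Fin.prod_univ_castSucc]
    exact congrArg₂ (· * ·) (ih _ _) rfl

theorem castQ_tpow_apply_of_one_right {a : ℕ} (A : QMap a 1) (n : ℕ) (j : Fin n → Bool)
    (h : Fin (a * n) → Bool) :
    castQ rfl (one_mul n) (tpow A n) j h =
      ∏ t : Fin n, A (fun _ => j t) (fun u => h (wp t u)) := by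
  rw [castQ, Matrix.reindex_apply, Matrix.submatrix_apply, tpow_apply]
  refine Finset.prod_congr rfl fun t _ => congrArg₂ A (funext fun u => ?_) rfl
  simp [Fin.fin_one_eq_zero u, wp]

theorem castQ_tpow_apply_of_one_left {b : ℕ} (A : QMap 1 b) (m : ℕ) (h : Fin (b * m) → Bool)
    (i : Fin m → Bool) :
    castQ (one_mul m) rfl (tpow A m) h i =
      ∏ s : Fin m, A (fun u => h (wp s u)) (fun _ => i s) := by
  rw [castQ, Matrix.reindex_apply, Matrix.submatrix_apply, tpow_apply]
  refine Finset.prod_congr rfl fun s _ => congrArg₂ A rfl (funext fun u => ?_)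
  simp [Fin.fin_one_eq_zero u, wp]

def parity {m : ℕ} (i : Fin m → Bool) : ZMod 2 := ∑ k, if i k then 1 else 0

theorem Zsp_one_left_apply {n : ℕ} (j : Fin n → Bool) (c : Bool) :
    Zsp 1 n j (fun _ => c) = if ∀ t, j t = c then 1 else 0 := by
  cases c <;> simp [Zsp]

theorem Xsp_one_right_apply {m : ℕ} (b : Fin 1 → Bool) (i : Fin m → Bool) :
    Xsp m 1 b i = if b = fun _ => decide (parity i = 1) then 1 else 0 := by
  have key : ∀ (p : ZMod 2) (c : Bool), p + (if c then 1 else 0) = 0 ↔ c = decide (p = 1) := by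
    decide
  simp only [Xsp, Fin.sum_univ_one, funext_iff, Fin.forall_fin_one]
  exact if_congr (key _ _) rfl rfl

theorem sigmaQ_apply_ofBlocks {m n : ℕ} (h : Fin (m * n) → Bool)
    (F : Fin m → Fin n → Bool) :
    sigmaQ m n h (ofBlocks F) = if h = ofBlocks (fun t s => F s t) then 1 else 0 := by
  simp only [sigmaQ, ofBlocks_wp, eq_ofBlocks_iff]
  exact if_congr forall_comm rfl rfl

/-- the Z-spider (copy) and the X-spider (XOR) satisfy the bialgebra law
(soundness of rule (BA1)). -/
theorem zh_bialgebra_zx (m n : ℕ) :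
    Zsp 1 n * Xsp m 1 =
      castQ rfl (one_mul n) (tpow (Xsp m 1) n) * sigmaQ m n *
        castQ (one_mul m) rfl (tpow (Zsp 1 n) m) := by
  ext j i
  have copy_col : ∀ h, castQ (one_mul m) rfl (tpow (Zsp 1 n) m) h i =
      if h = ofBlocks (fun s (_ : Fin n) => i s) then 1 else 0 := by
    intro h
    simp [castQ_tpow_apply_of_one_left, Zsp_one_left_apply, Finset.prod_boole, eq_ofBlocks_iff]
  rw [mul_apply_of_apply_eq_ite _ (Xsp_one_right_apply · i), Zsp_one_left_apply,
    mul_apply_of_apply_eq_ite _ copy_col,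
    mul_apply_of_apply_eq_ite _ (sigmaQ_apply_ofBlocks · _),
    castQ_tpow_apply_of_one_right]
  simp [Xsp_one_right_apply, funext_iff, Finset.prod_boole]
end

section
/- X(2,1) · Z(1,2) = |0⟩⟨0| + |0⟩⟨1|; that is, the XOR spider composed with the copy spider is the constant-|0⟩ map (the derived Hopf rule of the phase-free ZH-calculus, Lemma 3.4). -/
/-- the XOR spider composed with the copy spider is the constant-`|0⟩` map
(the derived Hopf rule). -/
theorem zh_hopf :
    Xsp 2 1 * Zsp 1 2 = (fun j _ => if j 0 = false then 1 else 0 : QMap 1 1) := by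
  ext j i
  rw [Matrix.mul_apply, ← Equiv.sum_comp (piFinTwoEquiv fun _ => Bool).symm]
  rw [Fintype.sum_prod_type]
  simp only [Fintype.sum_bool, Xsp, Zsp, piFinTwoEquiv, Equiv.coe_fn_symm_mk,
    Fin.sum_univ_two, Fin.sum_univ_one, Fin.forall_fin_one, Fin.forall_fin_two]
  rcases Bool.dichotomy (j 0) with h | h <;> rcases Bool.dichotomy (i 0) with h2 | h2 <;>
    simp [h, h2] <;> norm_num <;> decide
end

section
/- Every matrix in the family S of matrices generated by the phase-free ZH generators has all of its entries in the subring ℤ[1/√2] of ℂ; together with universality this characterizes the interpretations of phase-free ZH-diagrams as exactly the matrices over ℤ[1/√2]. -/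
/-- The smallest family of qubit maps containing the phase-free ZH generators
and closed under composition and Kronecker product. -/
inductive ZHgen : {m n : ℕ} → QMap m n → Prop
  | zsp (m n : ℕ) : ZHgen (Zsp m n)
  | hbox (m n : ℕ) : ZHgen (Hbox m n)
  | star : ZHgen starQ
  | id1 : ZHgen (1 : QMap 1 1)
  | swap : ZHgen swapQ
  | cup : ZHgen cupQ
  | cap : ZHgen capQ
  | comp {m k n : ℕ} {A : QMap k n} {B : QMap m k} : ZHgen A → ZHgen B → ZHgen (A * B)
  | tensor {m n m' n' : ℕ} {A : QMap m n} {B : QMap m' n'} :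
      ZHgen A → ZHgen B → ZHgen (tens A B)

/-- every matrix generated by the phase-free ZH generators has all of its
entries in the subring `ℤ[1/√2]` of `ℂ`. -/
theorem zh_entries_dyadic (m n : ℕ) (A : QMap m n) (h : ZHgen A) :
    ∀ j i, A j i ∈ Subring.closure {((Real.sqrt 2 : ℂ))⁻¹} := by
  induction h with
  | zsp m n =>
    intro j i; unfold Zsp; split
    · exact one_mem _
    · exact zero_mem _
  | hbox m n =>
    intro j i; unfold Hbox; split
    · exact neg_mem (one_mem _)
    · exact one_mem _
  | star =>
    intro j i
    exact Subring.subset_closure rfl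
  | id1 =>
    intro j i
    simp only [Matrix.one_apply]; split
    · exact one_mem _
    · exact zero_mem _
  | swap =>
    intro j i; unfold swapQ; split
    · exact one_mem _
    · exact zero_mem _
  | cup =>
    intro j i; unfold cupQ; split
    · exact one_mem _
    · exact zero_mem _
  | cap =>
    intro j i; unfold capQ; split
    · exact one_mem _
    · exact zero_mem _
  | comp hA hB ihA ihB =>
    intro j i
    rw [Matrix.mul_apply]
    exact Subring.sum_mem _ fun k _ => mul_mem (ihA _ _) (ihB _ _)
  | tensor hA hB ihA ihB =>
    intro j i
    unfold tens
    simp only [Matrix.reindex_apply, Matrix.submatrix_apply, Matrix.kroneckerMap_apply]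
    exact mul_mem (ihA _ _) (ihB _ _)
end

section
/- For all natural numbers m ≥ 1 and n ≥ 1: Z(m,n) · (Zg ⊗ I_{2^{m−1}}) = (Zg ⊗ I_{2^{n−1}}) · Z(m,n); that is, a Z gate on one leg of a Z-spider can be moved to any other leg (the derived Z-gate commutation rule of the phase-free ZH-calculus, Lemma 3.2). -/
theorem castZg_eq (m : ℕ) (hm : 1 ≤ m) (h : 1 + (m-1) = m) :
    castQ h h (tens Zg (1 : QMap (m-1) (m-1))) =
    Matrix.diagonal (fun i : Fin m → Bool => if i ⟨0, hm⟩ = true then (-1:ℂ) else 1) := by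
  ext j i
  simp only [castQ, tens, bitEquiv, Matrix.reindex_apply, Matrix.submatrix_apply,
    Equiv.symm_trans_apply, Equiv.arrowCongr_symm, Equiv.symm_symm, Equiv.arrowCongr_apply,
    Equiv.refl_symm, Equiv.refl_apply, Equiv.sumArrowEquivProdArrow, Equiv.coe_fn_mk,
    Matrix.kroneckerMap_apply, Function.comp, Zg, Matrix.one_apply, Matrix.diagonal,
    Matrix.of_apply, funext_iff]
  have h0 : (finCongr h (finSumFinEquiv (Sum.inl (0 : Fin 1)))) = ⟨0, hm⟩ := by
    apply Fin.ext; simp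
  simp only [h0]
  have key : (j ⟨0, hm⟩ = i ⟨0, hm⟩ ∧
      ∀ k : Fin (m-1), j (finCongr h (finSumFinEquiv (Sum.inr k))) =
        i (finCongr h (finSumFinEquiv (Sum.inr k)))) ↔ ∀ x, j x = i x := by
    constructor
    · rintro ⟨ha, hb⟩
      intro p
      have : p = finCongr h (finSumFinEquiv (finSumFinEquiv.symm ((finCongr h).symm p))) := by
        simp
      rw [this]
      rcases hx : finSumFinEquiv.symm ((finCongr h).symm p) with x | x
      · rw [Subsingleton.elim x 0, h0, ha]
      · exact hb x
    · intro hh; exact ⟨hh _, fun k => hh _⟩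
  by_cases hji : ∀ x, j x = i x
  · have : j = i := funext hji
    subst this; simp
  · have hk := key.not.mpr hji
    rw [not_and_or, not_forall] at hk
    rcases hk with hk | ⟨k, hk⟩
    · simp [hk, hji]
    · have hr : ¬ ∀ x : Fin (m-1), j ((finCongr h) (finSumFinEquiv (Sum.inr x))) =
          i ((finCongr h) (finSumFinEquiv (Sum.inr x))) := fun hh => hk (hh k)
      rw [if_neg hr, mul_zero, if_neg hji]

/-- a Z gate on one leg of a Z-spider can be moved to any other leg. -/
theorem zh_zgate_commute (m n : ℕ) (hm : 1 ≤ m) (hn : 1 ≤ n) :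
    Zsp m n *
      castQ (by omega : 1 + (m - 1) = m) (by omega : 1 + (m - 1) = m)
        (tens Zg (1 : QMap (m - 1) (m - 1))) =
    castQ (by omega : 1 + (n - 1) = n) (by omega : 1 + (n - 1) = n)
        (tens Zg (1 : QMap (n - 1) (n - 1))) * Zsp m n := by
  rw [castZg_eq m hm, castZg_eq n hn]
  ext j i
  rw [Matrix.mul_diagonal, Matrix.diagonal_mul]
  simp only [Zsp]
  by_cases hc : ((∀ k, i k = false) ∧ (∀ k, j k = false)) ∨
      ((∀ k, i k = true) ∧ (∀ k, j k = true))
  · rw [if_pos hc]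
    rcases hc with ⟨h1, h2⟩ | ⟨h1, h2⟩ <;> simp [h1 ⟨0, hm⟩, h2 ⟨0, hn⟩]
  · rw [if_neg hc]; simp
end
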